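/- arXiv:1705.06402 — 6 statements merged into one kernel-verified Lean document; each statement's English description precedes it below -/
import Mathlib

section
/- For every positive integer m, C_3(m) = ∑_{D=1}^{m} (−1)^{m−D} D^{m+2} / ((m−D)! · D!) = binom(m+3, 4) + 2·binom(m+2, 4), where binom(a,b) denotes the binomial coefficient (a choose b). -/
/-!
The sum is the explicit formula for a Stirling number of the second kind: with the binomial
coefficient pulled out, `∑_{D ≤ m} (-1)^(m-D) C(m,D) D^n = m! S(n,m)`, because both sides vanish
or equal `1` at `n = 0` and satisfy the same recurrence in `n`. Hence `C_3(m) = S(m+2, m)`, and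
the triangle recurrence `S(n+1,k+1) = (k+1) S(n,k+1) + S(n,k)` together with
`S(m+1, m) = C(m+1, 2)` evaluates `S(m+2, m)` by induction on `m`.
-/

open Finset Nat

theorem Nat.stirlingSecond_add_two_self_left (n : ℕ) :
    stirlingSecond (n + 2) n = (n + 3).choose 4 + 2 * (n + 2).choose 4 := by
  induction n with
  | zero => rfl
  | succ n ih =>
    have h3 := Nat.choose_succ_right_eq (n + 2) 2
    rw [show n + 2 - 2 = n by omega] at h3
    rw [show n + 1 + 2 = (n + 2) + 1 by ring, stirlingSecond_succ_succ, ih,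
      stirlingSecond_succ_self_left, Nat.choose_succ_succ (n + 3) 3, Nat.choose_succ_succ (n + 2) 3,
      Nat.choose_succ_succ (n + 2) 2]
    nlinarith [h3]

section CommRing

variable {R : Type*} [CommRing R]

theorem neg_one_pow_mul_choose_mul_sub (m D : ℕ) (hD : D ≤ m) :
    (-1 : R) ^ (m + 1 - D) * (m + 1).choose D * (D - (m + 1)) =
      (m + 1) * ((-1) ^ (m - D) * m.choose D) := by
  have h := congrArg (Nat.cast : ℕ → R) (Nat.choose_mul_succ_eq m D)
  rw [show m + 1 - D = m - D + 1 by omega, pow_succ]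
  push_cast [show D ≤ m + 1 by omega] at h ⊢
  linear_combination -(-1 : R) ^ (m - D) * h

theorem alternating_sum_choose_mul_pow_succ_succ (n m : ℕ) :
    ∑ D ∈ range (m + 2), (-1 : R) ^ (m + 1 - D) * (m + 1).choose D * (D : R) ^ (n + 1) =
      (m + 1) * ∑ D ∈ range (m + 2), (-1 : R) ^ (m + 1 - D) * (m + 1).choose D * (D : R) ^ n +
        (m + 1) * ∑ D ∈ range (m + 1), (-1 : R) ^ (m - D) * m.choose D * (D : R) ^ n := by
  rw [← sub_eq_iff_eq_add', mul_sum, mul_sum, ← sum_sub_distrib, sum_range_succ,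
    add_eq_left.mpr]
  · refine sum_congr rfl fun D hD ↦ ?_
    linear_combination (D : R) ^ n *
      neg_one_pow_mul_choose_mul_sub (R := R) m D (mem_range_succ_iff.mp hD)
  · push_cast
    ring

theorem alternating_sum_choose_mul_pow_eq_factorial_mul_stirlingSecond (n m : ℕ) :
    ∑ D ∈ range (m + 1), (-1 : R) ^ (m - D) * m.choose D * (D : R) ^ n =
      m ! * stirlingSecond n m := by
  induction n generalizing m with
  | zero =>
    have h := add_pow (1 : R) (-1) m
    simp only [one_pow, one_mul, add_neg_cancel] at h
    cases m with
    | zero => simp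
    | succ m => simp [← h, mul_comm]
  | succ n ih =>
    cases m with
    | zero => simp
    | succ m =>
      rw [alternating_sum_choose_mul_pow_succ_succ, ih, ih, stirlingSecond_succ_succ,
        factorial_succ]
      push_cast
      ring

end CommRing

theorem sum_neg_one_pow_mul_pow_div_factorial_mul_factorial_eq_stirlingSecond
    {K : Type*} [Field K] [CharZero K] (n m : ℕ) :
    ∑ D ∈ range (m + 1), (-1 : K) ^ (m - D) * (D : K) ^ n / ((m - D)! * D !) =
      stirlingSecond n m := by
  have hfact : (m ! : K) ≠ 0 := by exact_mod_cast m.factorial_ne_zero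
  rw [← mul_right_inj' hfact, ← alternating_sum_choose_mul_pow_eq_factorial_mul_stirlingSecond,
    mul_sum]
  refine sum_congr rfl fun D hD ↦ ?_
  rw [cast_choose K (mem_range_succ_iff.mp hD)]
  have : ((m - D)! : K) ≠ 0 := by exact_mod_cast (m - D).factorial_ne_zero
  have : (D ! : K) ≠ 0 := by exact_mod_cast D.factorial_ne_zero
  field_simp

theorem stmt5_general (m : ℕ) :
    ∑ D ∈ Finset.Icc 1 m,
        ((-1 : ℚ)) ^ (m - D) * (D : ℚ) ^ (m + 2) / ((m - D).factorial * D.factorial) =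
      ((m + 3).choose 4 : ℚ) + 2 * ((m + 2).choose 4 : ℚ) := by
  have hrange : ∑ D ∈ Icc 1 m, (-1 : ℚ) ^ (m - D) * (D : ℚ) ^ (m + 2) / ((m - D)! * D !) =
      ∑ D ∈ range (m + 1), (-1 : ℚ) ^ (m - D) * (D : ℚ) ^ (m + 2) / ((m - D)! * D !) := by
    rw [range_eq_Ico, sum_eq_sum_Ico_succ_bot (by omega : 0 < m + 1), Ico_add_one_right_eq_Icc]
    simp
  rw [hrange, sum_neg_one_pow_mul_pow_div_factorial_mul_factorial_eq_stirlingSecond]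
  exact_mod_cast Nat.stirlingSecond_add_two_self_left m

/-- `C_3(m) = ∑_{D=1}^m (−1)^{m−D} D^{m+2} / ((m−D)!·D!)
= (m+3 choose 4) + 2·(m+2 choose 4)`. -/
theorem stmt5 (m : ℕ) (hm : 1 ≤ m) :
    ∑ D ∈ Finset.Icc 1 m,
        ((-1 : ℚ)) ^ (m - D) * (D : ℚ) ^ (m + 2) / ((m - D).factorial * D.factorial) =
      ((m + 3).choose 4 : ℚ) + 2 * ((m + 2).choose 4 : ℚ) :=
  stmt5_general m
end

section
/- For every positive integer m, C_4(m) = ∑_{D=1}^{m} (−1)^{m−D} D^{m+3} / ((m−D)! · D!) = binom(m+5, 6) + 8·binom(m+4, 6) + 6·binom(m+3, 6), where binom(a,b) denotes the binomial coefficient (a choose b). -/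
/-!
The sum is the explicit formula `S(n, k) = (1/k!) ∑_D (-1)^(k-D) (k choose D) D^n` for the Stirling
numbers of the second kind, at `n = m + 3`, `k = m` (the `D = 0` term vanishes). Both sides obey
`S(n+1, k+1) = (k+1) S(n, k+1) + S(n, k)` with the same initial values, so `C_4(m) = S(m+3, m)`.
Iterating the recurrence from `S(m+1, m) = (m+1 choose 2)` gives the polynomial closed form
`S(m+3, m) = m²(m+1)²(m+2)(m+3)/48`, which agrees with the right-hand side as a polynomial in `m`.
-/

open Finset Nat

def explicitStirlingSecond (n k : ℕ) : ℚ :=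
  ∑ D ∈ range (k + 1), (-1 : ℚ) ^ (k - D) * (D : ℚ) ^ n / ((k - D)! * D !)

theorem explicitStirlingSecond_zero_left (k : ℕ) :
    explicitStirlingSecond 0 k = (0 : ℚ) ^ k / k ! := by
  have hterm : ∀ D ∈ range (k + 1), (-1 : ℚ) ^ (k - D) * (D : ℚ) ^ 0 / ((k - D)! * D !) =
      1 ^ D * (-1 : ℚ) ^ (k - D) * (k.choose D) / k ! := by
    intro D hD
    rw [Nat.cast_choose ℚ (Nat.lt_succ_iff.mp (mem_range.mp hD)), one_pow]
    field_simp
  rw [explicitStirlingSecond, sum_congr rfl hterm, ← sum_div, ← add_pow, add_neg_cancel]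

theorem explicitStirlingSecond_succ_zero (n : ℕ) : explicitStirlingSecond (n + 1) 0 = 0 := by
  simp [explicitStirlingSecond]

theorem explicitStirlingSecond_succ_succ (n k : ℕ) :
    explicitStirlingSecond (n + 1) (k + 1) =
      (k + 1) * explicitStirlingSecond n (k + 1) + explicitStirlingSecond n k := by
  -- `D ^ (n + 1) = (k + 1) * D ^ n - (k + 1 - D) * D ^ n`
  have hsplit : ∀ D ∈ range (k + 2),
      (-1 : ℚ) ^ (k + 1 - D) * (D : ℚ) ^ (n + 1) / ((k + 1 - D)! * D !) =
        (k + 1) * ((-1 : ℚ) ^ (k + 1 - D) * (D : ℚ) ^ n / ((k + 1 - D)! * D !)) +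
          (-1 : ℚ) ^ (k - D) * ((k + 1 - D : ℕ) : ℚ) * (D : ℚ) ^ n / ((k + 1 - D)! * D !) := by
    intro D hD
    rcases Nat.lt_succ_iff_lt_or_eq.mp (mem_range.mp hD) with hDk | rfl
    · rw [Nat.sub_add_comm (Nat.lt_succ_iff.mp hDk), pow_succ, pow_succ,
        Nat.cast_add_one, Nat.cast_sub (Nat.lt_succ_iff.mp hDk)]
      ring
    · simp only [Nat.sub_self, Nat.cast_zero, pow_zero, pow_succ]
      push_cast
      ring
  have hlower : ∑ D ∈ range (k + 2),
      (-1 : ℚ) ^ (k - D) * ((k + 1 - D : ℕ) : ℚ) * (D : ℚ) ^ n / ((k + 1 - D)! * D !) =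
        explicitStirlingSecond n k := by
    rw [sum_range_succ, Nat.sub_self, Nat.cast_zero, mul_zero, zero_mul, zero_div, add_zero]
    refine sum_congr rfl fun D hD => ?_
    rw [Nat.sub_add_comm (Nat.lt_succ_iff.mp (mem_range.mp hD)), factorial_succ]
    push_cast
    field_simp
  rw [explicitStirlingSecond, sum_congr rfl hsplit, sum_add_distrib, ← mul_sum, hlower]
  rfl

theorem explicitStirlingSecond_eq (n k : ℕ) :
    explicitStirlingSecond n k = stirlingSecond n k := by
  induction n generalizing k with
  | zero => cases k <;> simp [explicitStirlingSecond_zero_left]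
  | succ n ih =>
    cases k with
    | zero => simp [explicitStirlingSecond_succ_zero]
    | succ k => simp [explicitStirlingSecond_succ_succ, stirlingSecond_succ_succ, ih]

theorem cast_stirlingSecond_add_two_self_left (n : ℕ) :
    (stirlingSecond (n + 2) n : ℚ) = n * (n + 1) * (n + 2) * (3 * n + 1) / 24 := by
  induction n with
  | zero => simp
  | succ n ih =>
    rw [stirlingSecond_succ_succ, stirlingSecond_succ_self_left]
    push_cast [ih, cast_choose_two]
    ring

theorem cast_stirlingSecond_add_three_self_left (n : ℕ) :
    (stirlingSecond (n + 3) n : ℚ) = n ^ 2 * (n + 1) ^ 2 * (n + 2) * (n + 3) / 48 := by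
  induction n with
  | zero => simp
  | succ n ih =>
    rw [stirlingSecond_succ_succ]
    push_cast [ih, cast_stirlingSecond_add_two_self_left]
    ring

theorem cast_choose_six (n : ℕ) :
    (n.choose 6 : ℚ) = n * (n - 1) * (n - 2) * (n - 3) * (n - 4) * (n - 5) / 720 := by
  rw [cast_choose_eq_descPochhammer_div]
  simp [descPochhammer_succ_eval, Nat.factorial]

theorem stmt6_general (m : ℕ) :
    ∑ D ∈ Finset.Icc 1 m,
        ((-1 : ℚ)) ^ (m - D) * (D : ℚ) ^ (m + 3) / ((m - D).factorial * D.factorial) =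
      ((m + 5).choose 6 : ℚ) + 8 * ((m + 4).choose 6 : ℚ) + 6 * ((m + 3).choose 6 : ℚ) := by
  have hsum : ∑ D ∈ Finset.Icc 1 m,
      ((-1 : ℚ)) ^ (m - D) * (D : ℚ) ^ (m + 3) / ((m - D).factorial * D.factorial) =
        explicitStirlingSecond (m + 3) m := by
    rw [explicitStirlingSecond, range_eq_Ico, sum_eq_sum_Ico_succ_bot (by omega : 0 < m + 1), zero_add,
      Ico_add_one_right_eq_Icc]
    simp
  rw [hsum, explicitStirlingSecond_eq, cast_stirlingSecond_add_three_self_left]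
  push_cast [cast_choose_six]
  ring

/-- `C_4(m) = ∑_{D=1}^m (−1)^{m−D} D^{m+3} / ((m−D)!·D!)
= (m+5 choose 6) + 8·(m+4 choose 6) + 6·(m+3 choose 6)`. -/
theorem stmt6 (m : ℕ) (hm : 1 ≤ m) :
    ∑ D ∈ Finset.Icc 1 m,
        ((-1 : ℚ)) ^ (m - D) * (D : ℚ) ^ (m + 3) / ((m - D).factorial * D.factorial) =
      ((m + 5).choose 6 : ℚ) + 8 * ((m + 4).choose 6 : ℚ) + 6 * ((m + 3).choose 6 : ℚ) :=
  stmt6_general m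
end

section
/- For every real number x with 0 ≤ x < 1, the series ∑_{D=1}^{∞} (D^{D−1}/D!)·(x·e^{−x})^D converges and its sum equals x. -/
/-!
Let `T(t) = ∑ₙ cₙ tⁿ` with `cₙ = n^{n-1} / n!`; it converges for `|t| < e⁻¹` since `cₙ ≤ eⁿ`.
For small `|y|`, expanding every `e^{-ny}` in `∑ₙ cₙ (y e^{-y})ⁿ` gives an absolutely convergent
double series. Regrouped by total degree `N`, its coefficient of `y^N` is, for `N ≥ 2`,
`(1 / N!) ∑ₙ (-1)^{N-n} C(N, n) n^{N-1}`: an `N`-th finite difference of a polynomial of degree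
`N - 1`, hence zero. So `T(y e^{-y}) = y` near `0`. Since `y ↦ y e^{-y}` maps `(-1/8, 1)` into
the disc of convergence, the identity theorem extends this to the whole interval.
-/

open Finset Real Filter Topology
open scoped Nat

theorem HasSum.sum_antidiagonal {A α : Type*} [AddCommMonoid A] [HasAntidiagonal A]
    [AddCommMonoid α] [TopologicalSpace α] [ContinuousAdd α] [RegularSpace α]
    {f : A × A → α} {a : α} (h : HasSum f a) :
    HasSum (fun n => ∑ p ∈ antidiagonal n, f p) a :=
  (HasAntidiagonal.sigmaAntidiagonalEquivProd.hasSum_iff.mpr h).sigma fun n => by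
    rw [← Finset.sum_attach]
    exact hasSum_fintype _

theorem sum_range_alternating_choose_mul_pow_eq_zero {R : Type*} [CommRing R] {N k : ℕ}
    (h : k < N) : ∑ n ∈ range (N + 1), (-1 : R) ^ (N - n) * N.choose n * (n : R) ^ k = 0 := by
  have := congr_fun (fwdDiff_iter_pow_eq_zero_of_lt (R := R) h) 0
  rw [fwdDiff_iter_eq_sum_shift] at this
  simpa [zsmul_eq_mul] using this

theorem mem_eball_zero_ofReal_of_abs_lt {t r : ℝ} (ht : |t| < r) :
    t ∈ Metric.eball (0 : ℝ) (ENNReal.ofReal r) := by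
  rwa [Metric.eball_ofReal, mem_ball_zero_iff, norm_eq_abs]

theorem Real.hasSum_pow_div_factorial (z : ℝ) : HasSum (fun m => z ^ m / m !) (exp z) := by
  rw [exp_eq_exp_ℝ]
  exact NormedSpace.expSeries_div_hasSum_exp z

theorem mul_exp_neg_lt_exp_neg_one {y : ℝ} (hy : y ≠ 1) : y * exp (-y) < exp (-1) := by
  have := add_one_lt_exp (sub_ne_zero.mpr hy)
  calc y * exp (-y) < exp (y - 1) * exp (-y) := by gcongr; linarith
    _ = exp (-1) := by rw [← exp_add]; ring_nf

theorem abs_mul_exp_neg_lt_exp_neg_one {y : ℝ} (hy : |y| * exp (1 + |y|) < 1) :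
    |y * exp (-y)| < exp (-1) := by
  rw [abs_mul, abs_of_pos (exp_pos _), ← mul_lt_mul_iff_of_pos_right (exp_pos 1), ← exp_add,
    neg_add_cancel, exp_zero, mul_assoc, ← exp_add]
  calc |y| * exp (-y + 1) ≤ |y| * exp (1 + |y|) :=
        mul_le_mul_of_nonneg_left (exp_le_exp.mpr (by linarith [neg_le_abs y])) (abs_nonneg y)
    _ < 1 := hy

theorem abs_mul_exp_one_add_abs_lt_one {y : ℝ} (hy : |y| < 1 / 8) :
    |y| * exp (1 + |y|) < 1 := by
  have : exp (1 + |y|) < 8 :=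
    calc exp (1 + |y|) < exp 1 * exp 1 := by rw [← exp_add]; gcongr; linarith
      _ < 8 := by nlinarith [exp_one_lt_d9, exp_pos 1]
  nlinarith [abs_nonneg y]

theorem abs_mul_exp_neg_lt_exp_neg_one_of_mem_Ioo {y : ℝ} (hy : y ∈ Set.Ioo (-(1 / 8)) 1) :
    |y * exp (-y)| < exp (-1) := by
  rcases le_or_gt 0 y with h | h
  · rw [abs_of_nonneg (by positivity)]
    exact mul_exp_neg_lt_exp_neg_one hy.2.ne
  · refine abs_mul_exp_neg_lt_exp_neg_one (abs_mul_exp_one_add_abs_lt_one ?_)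
    rw [abs_of_neg h]
    linarith [hy.1]

/-- `n^(n-1) / n!` for `n ≥ 1`, and `0` for `n = 0` (where that formula would give `1`). -/
noncomputable def treeCoeff : ℕ → ℝ
  | 0 => 0
  | n + 1 => ((n + 1 : ℕ) : ℝ) ^ n / (n + 1)!

theorem treeCoeff_nonneg (n : ℕ) : 0 ≤ treeCoeff n := by
  cases n <;> simp only [treeCoeff] <;> positivity

theorem treeCoeff_le_exp (n : ℕ) : treeCoeff n ≤ exp n := by
  cases n with
  | zero => simp [treeCoeff]
  | succ n =>
    have hn : (1 : ℝ) ≤ (n + 1 : ℕ) := by norm_cast; omega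
    calc treeCoeff (n + 1) = ((n + 1 : ℕ) : ℝ) ^ (n + 1) / (n + 1)! / (n + 1 : ℕ) := by
          rw [treeCoeff, pow_succ]; field_simp
      _ ≤ ((n + 1 : ℕ) : ℝ) ^ (n + 1) / (n + 1)! := div_le_self (by positivity) hn
      _ ≤ exp (n + 1 : ℕ) := pow_div_factorial_le_exp (x := ((n + 1 : ℕ) : ℝ)) (by positivity) _

theorem treeCoeff_mul_exp_neg_one_pow_le_one (n : ℕ) : treeCoeff n * exp (-1) ^ n ≤ 1 :=
  calc treeCoeff n * exp (-1) ^ n ≤ exp n * exp (-1) ^ n := by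
        gcongr; exact treeCoeff_le_exp n
    _ = 1 := by rw [← exp_nat_mul, ← exp_add]; simp

theorem treeCoeff_mul_neg_pow_div_factorial {N n : ℕ} (hN : 2 ≤ N) (hn : n ≤ N) :
    treeCoeff n * ((-n : ℝ) ^ (N - n) / (N - n)!) =
      (-1 : ℝ) ^ (N - n) * N.choose n * (n : ℝ) ^ (N - 1) / N ! := by
  rcases n with _ | m
  · simp [treeCoeff, zero_pow (show N - 1 ≠ 0 by omega)]
  · have hpow : ((m + 1 : ℕ) : ℝ) ^ m * ((m + 1 : ℕ) : ℝ) ^ (N - (m + 1)) =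
        ((m + 1 : ℕ) : ℝ) ^ (N - 1) := by rw [← pow_add]; congr 1; omega
    rw [treeCoeff, Nat.cast_choose ℝ hn, neg_pow, ← hpow]
    field_simp

theorem sum_range_treeCoeff_mul_neg_pow_div_factorial (N : ℕ) :
    ∑ n ∈ range (N + 1), treeCoeff n * ((-n : ℝ) ^ (N - n) / (N - n)!) =
      if N = 1 then 1 else 0 := by
  rcases Nat.lt_or_ge N 2 with hN | hN
  · interval_cases N <;> simp [sum_range_succ, treeCoeff]
  · rw [sum_congr rfl fun n hn => treeCoeff_mul_neg_pow_div_factorial hN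
      (Nat.lt_succ_iff.mp (mem_range.mp hn)), ← sum_div,
      sum_range_alternating_choose_mul_pow_eq_zero (by omega), zero_div, if_neg (by omega)]

noncomputable def treeSeries : FormalMultilinearSeries ℝ ℝ ℝ :=
  .ofScalars ℝ treeCoeff

noncomputable def treeFun : ℝ → ℝ := treeSeries.sum

theorem le_radius_treeSeries : ENNReal.ofReal (exp (-1)) ≤ treeSeries.radius := by
  refine treeSeries.le_radius_of_bound 1 fun n => ?_
  rw [treeSeries, FormalMultilinearSeries.ofScalars_norm, norm_of_nonneg (treeCoeff_nonneg n),
    Real.coe_toNNReal _ (exp_pos _).le]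
  exact treeCoeff_mul_exp_neg_one_pow_le_one n

theorem hasFPowerSeriesOnBall_treeFun :
    HasFPowerSeriesOnBall treeFun treeSeries 0 (ENNReal.ofReal (exp (-1))) := by
  have hpos : 0 < ENNReal.ofReal (exp (-1)) := by simp [exp_pos]
  exact (treeSeries.hasFPowerSeriesOnBall (hpos.trans_le le_radius_treeSeries)).mono hpos
    le_radius_treeSeries

theorem hasSum_treeFun {t : ℝ} (ht : |t| < exp (-1)) :
    HasSum (fun n => treeCoeff n * t ^ n) (treeFun t) := by
  simpa [treeSeries, FormalMultilinearSeries.ofScalars_apply_eq, mul_comm] using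
    hasFPowerSeriesOnBall_treeFun.hasSum (mem_eball_zero_ofReal_of_abs_lt ht)

theorem analyticAt_treeFun {t : ℝ} (ht : |t| < exp (-1)) : AnalyticAt ℝ treeFun t :=
  hasFPowerSeriesOnBall_treeFun.analyticOnNhd t (mem_eball_zero_ofReal_of_abs_lt ht)

/-- Terms of `∑ₙ cₙ yⁿ e^{-ny}` with each `e^{-ny}` expanded as `∑ₘ (-ny)ᵐ / m!`. -/
noncomputable def treeDoubleTerm (y : ℝ) (p : ℕ × ℕ) : ℝ :=
  treeCoeff p.1 * y ^ p.1 * ((-p.1 * y) ^ p.2 / p.2 !)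

theorem hasSum_treeDoubleTerm_fiber (y : ℝ) (n : ℕ) :
    HasSum (fun m => treeDoubleTerm y (n, m)) (treeCoeff n * (y * exp (-y)) ^ n) := by
  have h : treeCoeff n * (y * exp (-y)) ^ n = treeCoeff n * y ^ n * exp (-n * y) := by
    rw [mul_pow, ← exp_nat_mul]
    ring_nf
  rw [h]
  exact (hasSum_pow_div_factorial (-n * y)).mul_left _

theorem summable_treeDoubleTerm {y : ℝ} (hy : |y| * exp (1 + |y|) < 1) :
    Summable (treeDoubleTerm y) := by
  have hnorm (p : ℕ × ℕ) : |treeDoubleTerm y p| =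
      treeCoeff p.1 * |y| ^ p.1 * ((p.1 * |y|) ^ p.2 / p.2 !) := by
    simp [treeDoubleTerm, abs_mul, abs_div, abs_of_nonneg (treeCoeff_nonneg _)]
  have hrow (n : ℕ) : HasSum (fun m => |treeDoubleTerm y (n, m)|)
      (treeCoeff n * |y| ^ n * exp (n * |y|)) := by
    simpa only [hnorm] using (hasSum_pow_div_factorial (n * |y|)).mul_left _
  refine Summable.of_abs ((summable_prod_of_nonneg fun p => abs_nonneg _).mpr
    ⟨fun n => (hrow n).summable, ?_⟩)
  simp only [fun n => (hrow n).tsum_eq]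
  refine (summable_geometric_of_lt_one (by positivity) hy).of_nonneg_of_le
    (fun n => by have := treeCoeff_nonneg n; positivity) fun n => ?_
  calc treeCoeff n * |y| ^ n * exp (n * |y|) ≤ exp n * |y| ^ n * exp (n * |y|) := by
        gcongr; exact treeCoeff_le_exp n
    _ = (|y| * exp (1 + |y|)) ^ n := by
        rw [mul_pow, ← exp_nat_mul, mul_add, mul_one, exp_add]; ring

theorem sum_antidiagonal_treeDoubleTerm (y : ℝ) (N : ℕ) :
    ∑ p ∈ antidiagonal N, treeDoubleTerm y p = if N = 1 then y else 0 := by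
  rw [Nat.sum_antidiagonal_eq_sum_range_succ_mk]
  calc ∑ n ∈ range (N + 1), treeDoubleTerm y (n, N - n)
      = ∑ n ∈ range (N + 1), treeCoeff n * ((-n : ℝ) ^ (N - n) / (N - n)!) * y ^ N := by
        refine sum_congr rfl fun n hn => ?_
        simp only [treeDoubleTerm]
        rw [mul_pow, ← pow_mul_pow_sub y (Nat.lt_succ_iff.mp (mem_range.mp hn))]
        ring
    _ = if N = 1 then y else 0 := by
        rw [← sum_mul, sum_range_treeCoeff_mul_neg_pow_div_factorial]
        split_ifs with h <;> simp [h]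

theorem hasSum_treeCoeff_mul_mul_exp_neg_pow {y : ℝ} (hy : |y| * exp (1 + |y|) < 1) :
    HasSum (fun n => treeCoeff n * (y * exp (-y)) ^ n) y := by
  obtain ⟨s, hs⟩ := summable_treeDoubleTerm hy
  have hdiag := hs.sum_antidiagonal
  simp only [sum_antidiagonal_treeDoubleTerm] at hdiag
  obtain rfl : y = s := (hasSum_ite_eq 1 y).unique hdiag
  exact hs.prod_fiberwise (hasSum_treeDoubleTerm_fiber y)

theorem treeFun_mul_exp_neg {y : ℝ} (hy : y ∈ Set.Ioo (-(1 / 8)) 1) :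
    treeFun (y * exp (-y)) = y := by
  have hana : AnalyticOnNhd ℝ (fun y => treeFun (y * exp (-y))) (Set.Ioo (-(1 / 8)) 1) :=
    fun y hy => (analyticAt_treeFun (abs_mul_exp_neg_lt_exp_neg_one_of_mem_Ioo hy)).comp
      (f := fun y => y * exp (-y)) (analyticAt_id.mul analyticAt_id.neg.rexp)
  have hnear : (fun y => treeFun (y * exp (-y))) =ᶠ[𝓝 0] id := by
    filter_upwards [Ioo_mem_nhds (by norm_num : -(1 / 8 : ℝ) < 0) (by norm_num : (0 : ℝ) < 1 / 8)]
      with y hy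
    have hsmall := abs_mul_exp_one_add_abs_lt_one (abs_lt.mpr hy)
    exact (hasSum_treeFun (abs_mul_exp_neg_lt_exp_neg_one hsmall)).unique
      (hasSum_treeCoeff_mul_mul_exp_neg_pow hsmall)
  exact hana.eqOn_of_preconnected_of_eventuallyEq analyticOnNhd_id
    (convex_Ioo _ _).isPreconnected (by norm_num) hnear hy

/-- for `0 ≤ x < 1`, `∑_{D=1}^∞ (D^{D−1}/D!)·(x·e^{−x})^D = x`
(the series converges with this sum).  Here the series is indexed by `n : ℕ`
with `D = n + 1`. -/
theorem stmt7 (x : ℝ) (hx0 : 0 ≤ x) (hx1 : x < 1) :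
    HasSum
      (fun n : ℕ =>
        ((n + 1 : ℕ) ^ ((n + 1) - 1) / (n + 1).factorial : ℝ) *
          (x * Real.exp (-x)) ^ (n + 1))
      x := by
  have hx : x ∈ Set.Ioo (-(1 / 8)) 1 := ⟨by linarith, hx1⟩
  have h := hasSum_treeFun (abs_mul_exp_neg_lt_exp_neg_one_of_mem_Ioo hx)
  rw [treeFun_mul_exp_neg hx, ← hasSum_nat_add_iff' 1] at h
  simpa [treeCoeff] using h
end

section
/- For every real number x with 0 ≤ x < 1, the series ∑_{D=1}^{∞} (D^{D+1}/D!)·(x·e^{−x})^D converges and its sum equals x/(1−x)^3. -/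
/-!
Put `w = x e^{-x}` and expand `e^{-nx}`: the series becomes the double series
`∑_{n,k} n^{n+1}/n! · (-n)^k/k! · x^{n+k}`, absolutely convergent for small `|x|`. Along the
antidiagonal `n + k = m` the coefficient is `(1/m!) ∑_n (-1)^{m-n} C(m,n) n^{m+1}`, the `m`-th
forward difference of `r ↦ r^{m+1}` at `0` divided by `m!`, which is `C(m+1,2)`; and
`∑_m C(m+1,2) x^m = x/(1-x)^3`. Since `n^{n+1}/n! ≤ n e^n`, the power series `∑ n^{n+1} w^n/n!`
converges on `|w| < 1/e`, and `|x e^{-x}| < 1/e` on the interval `(-1/10, 1)`; both sides are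
therefore analytic there, and the identity theorem carries the equality from near `0` to `[0, 1)`.
-/

open Finset Filter Topology Real fwdDiff
open scoped Nat

theorem fwdDiff_iter_pow_succ_apply_zero {R : Type*} [CommRing R] (n : ℕ) :
    (Δ_[1])^[n] (fun r : R ↦ r ^ (n + 1)) 0 = n ! * (n + 1).choose 2 := by
  induction n with
  | zero => simp
  | succ n ih =>
    have hΔ : (Δ_[1] fun r : R ↦ r ^ (n + 2)) =
        ∑ i ∈ range (n + 2), (n + 2).choose i • fun r : R ↦ r ^ i := by
      ext x
      simp [nsmul_eq_mul, fwdDiff, add_pow, sum_range_succ, mul_comm]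
    simp_rw [Function.iterate_succ_apply, hΔ, fwdDiff_iter_finsetSum, fwdDiff_iter_const_smul,
      sum_range_succ]
    rw [sum_eq_zero fun i hi ↦ by
      rw [fwdDiff_iter_pow_eq_zero_of_lt (by have := mem_range.1 hi; lia), smul_zero]]
    simp only [zero_add, Pi.add_apply, fwdDiff_iter_eq_factorial, nsmul_eq_mul, Pi.mul_apply,
      Pi.natCast_apply, ih]
    have hchoose : (n + 1).choose 2 * (n + 2) = (n + 2).choose 2 * n :=
      Nat.choose_mul_succ_eq (n + 1) 2
    replace hchoose := congrArg (Nat.cast (R := R)) hchoose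
    rw [Nat.choose_symm_add, Nat.choose_succ_self_right, Nat.factorial_succ]
    push_cast at hchoose ⊢
    linear_combination (n ! : R) * hchoose

theorem Summable.hasSum_fiberwise_of_hasSum_antidiagonal {E : Type*} [AddCommMonoid E]
    [TopologicalSpace E] [ContinuousAdd E] [T3Space E] {f : ℕ × ℕ → E} {g : ℕ → E} {s : E}
    (hf : Summable f) (hg : ∀ n, HasSum (fun k ↦ f (n, k)) (g n))
    (hs : HasSum (fun m ↦ ∑ p ∈ antidiagonal m, f p) s) : HasSum g s := by
  have hdiag : HasSum (fun m ↦ ∑ p ∈ antidiagonal m, f p) (∑' p, f p) :=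
    ((HasAntidiagonal.sigmaAntidiagonalEquivProd.hasSum_iff).2 hf.hasSum).sigma
      fun m ↦ (antidiagonal m).hasSum f
  rw [hs.unique hdiag]
  exact hf.hasSum.prod_fiberwise hg

theorem hasSum_mul_pow_mul_pow_div_factorial (a x t : ℝ) (n : ℕ) :
    HasSum (fun k ↦ a * x ^ n * (n * t) ^ k / k !) (a * (x * exp t) ^ n) := by
  have h := (NormedSpace.expSeries_div_hasSum_exp (n * t)).mul_left (a * x ^ n)
  rw [← exp_eq_exp_ℝ, exp_nat_mul] at h
  simpa only [mul_pow, mul_div_assoc, mul_assoc] using h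

theorem hasSum_choose_two_mul_pow {𝕜 : Type*} [NormedField 𝕜] {x : 𝕜} (hx : ‖x‖ < 1) :
    HasSum (fun m ↦ ((m + 1).choose 2 : 𝕜) * x ^ m) (x / (1 - x) ^ 3) := by
  rw [← hasSum_nat_add_iff' 1]
  simpa [pow_succ, mul_assoc, div_eq_inv_mul, mul_comm] using
    (hasSum_choose_mul_geometric_of_norm_lt_one 2 hx).mul_right x

noncomputable def selfPowCoeff (n : ℕ) : ℝ := (n : ℝ) ^ (n + 1) / n !

theorem selfPowCoeff_nonneg (n : ℕ) : 0 ≤ selfPowCoeff n := by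
  unfold selfPowCoeff; positivity

theorem selfPowCoeff_le (n : ℕ) : selfPowCoeff n ≤ n * exp 1 ^ n := by
  rw [selfPowCoeff, pow_succ', mul_div_assoc, ← exp_nat_mul, mul_one]
  exact mul_le_mul_of_nonneg_left (pow_div_factorial_le_exp _ n.cast_nonneg n) n.cast_nonneg

theorem sum_selfPowCoeff_mul_neg_pow_div_factorial (m : ℕ) :
    ∑ n ∈ range (m + 1), selfPowCoeff n * (-(n : ℝ)) ^ (m - n) / (m - n)! =
      (m + 1).choose 2 := by
  have hm : (m ! : ℝ) ≠ 0 := by positivity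
  rw [← mul_left_inj' hm, mul_comm ((m + 1).choose 2 : ℝ), ← fwdDiff_iter_pow_succ_apply_zero,
    fwdDiff_iter_eq_sum_shift, sum_mul]
  refine sum_congr rfl fun n hn ↦ ?_
  have hnm : n ≤ m := Nat.lt_succ_iff.mp (mem_range.mp hn)
  have hfac : (m.choose n : ℝ) * n ! * (m - n)! = m ! := by
    exact_mod_cast Nat.choose_mul_factorial_mul_factorial hnm
  rw [← hfac, selfPowCoeff, neg_pow, zsmul_eq_mul]
  push_cast
  field_simp
  rw [← pow_add, show n + 1 + (m - n) = m + 1 by lia, zero_add, nsmul_one, mul_comm]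

noncomputable def selfPowSeries : FormalMultilinearSeries ℝ ℝ ℝ :=
  FormalMultilinearSeries.ofScalars ℝ selfPowCoeff

theorem ofReal_exp_neg_one_le_radius_selfPowSeries :
    ENNReal.ofReal (exp (-1)) ≤ selfPowSeries.radius := by
  refine ENNReal.le_of_forall_nnreal_lt fun r hr ↦ selfPowSeries.le_radius_of_summable_norm ?_
  have hr' : (r : ℝ) * exp 1 < 1 := by
    rw [← ENNReal.ofReal_coe_nnreal, ENNReal.ofReal_lt_ofReal_iff (exp_pos _), exp_neg] at hr
    rwa [← lt_inv_mul_iff₀' (exp_pos 1), mul_one]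
  have hgeom : Summable fun n : ℕ ↦ (n : ℝ) * (r * exp 1) ^ n := by
    simpa using summable_pow_mul_geometric_of_norm_lt_one 1
      (by rwa [norm_of_nonneg (by positivity)] : ‖(r : ℝ) * exp 1‖ < 1)
  refine hgeom.of_nonneg_of_le (fun n ↦ by positivity) fun n ↦ ?_
  rw [selfPowSeries, FormalMultilinearSeries.ofScalars_norm,
    norm_of_nonneg (selfPowCoeff_nonneg n), mul_pow, ← mul_assoc, mul_right_comm]
  gcongr
  exact selfPowCoeff_le n

theorem mem_eball_radius_selfPowSeries {w : ℝ} (hw : |w| < exp (-1)) :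
    w ∈ Metric.eball 0 selfPowSeries.radius := by
  refine Metric.mem_eball.2 (lt_of_lt_of_le ?_ ofReal_exp_neg_one_le_radius_selfPowSeries)
  rwa [edist_zero_right, ← ofReal_norm, ENNReal.ofReal_lt_ofReal_iff (exp_pos _)]

theorem hasSum_selfPowCoeff_mul_pow {w : ℝ} (hw : |w| < exp (-1)) :
    HasSum (fun n ↦ selfPowCoeff n * w ^ n) (selfPowSeries.sum w) := by
  simpa [selfPowSeries, FormalMultilinearSeries.ofScalars_apply_eq, mul_comm] using
    selfPowSeries.hasSum (mem_eball_radius_selfPowSeries hw)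

theorem analyticAt_selfPowSeries_sum {w : ℝ} (hw : |w| < exp (-1)) :
    AnalyticAt ℝ selfPowSeries.sum w :=
  selfPowSeries.analyticOnNhd w (mem_eball_radius_selfPowSeries hw)

theorem hasSum_selfPowCoeff_mul_mul_exp_neg_pow {x : ℝ} (hx : |x| * exp |x| < exp (-1)) :
    HasSum (fun n ↦ selfPowCoeff n * (x * exp (-x)) ^ n) (x / (1 - x) ^ 3) := by
  set f : ℕ × ℕ → ℝ := fun p ↦ selfPowCoeff p.1 * x ^ p.1 * (p.1 * -x) ^ p.2 / (p.2)!
  have habs : ∀ p, |f p| = selfPowCoeff p.1 * |x| ^ p.1 * (p.1 * |x|) ^ p.2 / (p.2)! := by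
    rintro ⟨n, k⟩
    simp [f, abs_mul, abs_div, abs_pow, abs_of_nonneg (selfPowCoeff_nonneg n)]
  have hf : Summable f := by
    refine Summable.of_abs ((summable_prod_of_nonneg fun p ↦ abs_nonneg _).2 ⟨fun n ↦ ?_, ?_⟩)
    · simpa only [habs] using (hasSum_mul_pow_mul_pow_div_factorial _ _ _ n).summable
    · simp_rw [habs,
        fun n ↦ (hasSum_mul_pow_mul_pow_div_factorial (selfPowCoeff n) |x| |x| n).tsum_eq]
      exact (hasSum_selfPowCoeff_mul_pow (by rwa [abs_of_nonneg (by positivity)])).summable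
  have hx1 : ‖x‖ < 1 := calc
    |x| ≤ |x| * exp |x| := le_mul_of_one_le_right (abs_nonneg x) (one_le_exp (abs_nonneg x))
    _ < exp (-1) := hx
    _ < 1 := exp_lt_one_iff.mpr (by norm_num)
  have hdiag : ∀ m, ∑ p ∈ antidiagonal m, f p = (m + 1).choose 2 * x ^ m := fun m ↦ by
    rw [Nat.sum_antidiagonal_eq_sum_range_succ_mk, ← sum_selfPowCoeff_mul_neg_pow_div_factorial,
      sum_mul]
    refine sum_congr rfl fun n hn ↦ ?_
    obtain ⟨k, rfl⟩ := Nat.exists_eq_add_of_le (Nat.lt_succ_iff.mp (mem_range.mp hn))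
    simp only [f, Nat.add_sub_cancel_left, pow_add]
    ring
  refine hf.hasSum_fiberwise_of_hasSum_antidiagonal
    (fun n ↦ hasSum_mul_pow_mul_pow_div_factorial _ x (-x) n) ?_
  simp_rw [hdiag]
  exact hasSum_choose_two_mul_pow hx1

theorem abs_mul_exp_neg_lt_exp_neg_one_s9 {x : ℝ} (h0 : -(1 / 10) < x) (h1 : x < 1) :
    |x * exp (-x)| < exp (-1) := by
  rcases le_or_gt x 0 with hx | hx
  · calc |x * exp (-x)| = -x * exp (-x) := by
          rw [abs_mul, abs_of_nonpos hx, abs_of_pos (exp_pos _)]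
      _ ≤ 1 / 10 * exp 1 := by gcongr <;> linarith
      _ < exp (-1) := by
          rw [exp_neg, ← one_div, lt_div_iff₀ (exp_pos 1)]
          nlinarith [exp_one_lt_d9, exp_pos 1]
  · have hlt : x < exp (x - 1) := by linarith [add_one_lt_exp (sub_ne_zero.2 h1.ne)]
    calc |x * exp (-x)| = x * exp (-x) := abs_of_pos (by positivity)
      _ < exp (x - 1) * exp (-x) := by gcongr
      _ = exp (-1) := by rw [← exp_add]; ring_nf

theorem selfPowSeries_sum_mul_exp_neg {x : ℝ} (h0 : -(1 / 10) < x) (h1 : x < 1) :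
    selfPowSeries.sum (x * exp (-x)) = x / (1 - x) ^ 3 := by
  have hlhs : AnalyticOnNhd ℝ (fun v ↦ selfPowSeries.sum (v * exp (-v)))
      (Set.Ioo (-(1 / 10) : ℝ) 1) :=
    fun v hv ↦ (analyticAt_selfPowSeries_sum (abs_mul_exp_neg_lt_exp_neg_one_s9 hv.1 hv.2)).comp
      (f := fun v ↦ v * exp (-v)) (by fun_prop)
  have hrhs : AnalyticOnNhd ℝ (fun v : ℝ ↦ v / (1 - v) ^ 3) (Set.Ioo (-(1 / 10) : ℝ) 1) :=
    fun v hv ↦ analyticAt_id.div (by fun_prop) (pow_ne_zero 3 (sub_ne_zero.2 hv.2.ne'))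
  have hnear : (fun v ↦ selfPowSeries.sum (v * exp (-v))) =ᶠ[𝓝 0] fun v ↦ v / (1 - v) ^ 3 := by
    have hsmall : ContinuousAt (fun v : ℝ ↦ |v| * exp |v|) 0 := by fun_prop
    filter_upwards [Ioo_mem_nhds (by norm_num : -(1 / 10 : ℝ) < 0) one_pos,
      hsmall.eventually_lt continuousAt_const (by simpa using exp_pos (-1))] with v hv hv'
    exact (hasSum_selfPowCoeff_mul_pow (abs_mul_exp_neg_lt_exp_neg_one_s9 hv.1 hv.2)).unique
      (hasSum_selfPowCoeff_mul_mul_exp_neg_pow hv')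
  exact hlhs.eqOn_of_preconnected_of_eventuallyEq hrhs isPreconnected_Ioo
    ⟨by norm_num, one_pos⟩ hnear ⟨h0, h1⟩

/-- for `0 ≤ x < 1`, `∑_{D=1}^∞ (D^{D+1}/D!)·(x·e^{−x})^D = x/(1−x)^3`. -/
theorem stmt9 (x : ℝ) (hx0 : 0 ≤ x) (hx1 : x < 1) :
    HasSum
      (fun n : ℕ =>
        ((n + 1 : ℕ) ^ ((n + 1) + 1) / (n + 1).factorial : ℝ) * (x * Real.exp (-x)) ^ (n + 1))
      (x / (1 - x) ^ 3) := by
  have h := hasSum_selfPowCoeff_mul_pow (abs_mul_exp_neg_lt_exp_neg_one_s9 (by linarith) hx1)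
  rw [selfPowSeries_sum_mul_exp_neg (by linarith) hx1, ← hasSum_nat_add_iff' 1] at h
  simpa [selfPowCoeff] using h
end

section
/- For every integer d ≥ 1, the following identity of rational numbers holds: ∑_{D=1}^{5d−3} [ (−1)^{5d−2−D} · D^{5d−2} / ((5d−3−D)! · D!) ] · ( 375d^3 + 225d^2 − 355d + 84 − (5d−3)·5d·(5d+8)/D − D·(75d^2 − 15d + 32) + 4D^2 ) = 109375d^6/24 − 315625d^5/24 + 246875d^4/24 + 125d^3/24 − 12225d^2/4 + 3820d/3 − 188. -/
/-!
Since `(-1)^(n-D) / ((n-D)! D!) = (-1)^(n-D) C(n,D) / n!`, the sum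
`∑_D (-1)^(n-D) D^k / ((n-D)! D!)` is the `n`-th finite difference of `x^k` at `0` divided
by `n!`, i.e. the Stirling number of the second kind `S(k, n)`. Expanding the bracket, the
left-hand side with `n = 5d - 3` becomes a combination of `S(n, n)`, `S(n+1, n)`, `S(n+2, n)`
and `S(n+3, n)`, which are explicit polynomials in `n`.
-/

open Finset Nat

section AlternatingMoment

variable (R : Type*) [CommRing R]

def alternatingMoment (n k : ℕ) : R :=
  ∑ j ∈ range (n + 1), (-1) ^ (n - j) * (n.choose j : R) * (j : R) ^ k

@[simp]
lemma alternatingMoment_zero_left (k : ℕ) : alternatingMoment R 0 k = (0 : R) ^ k := by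
  simp [alternatingMoment]

lemma alternatingMoment_succ_zero (n : ℕ) : alternatingMoment R (n + 1) 0 = 0 := by
  simpa [alternatingMoment, mul_comm] using (add_pow (1 : R) (-1) (n + 1)).symm

lemma alternatingMoment_succ_succ (n k : ℕ) :
    alternatingMoment R (n + 1) (k + 1) =
      (n + 1) * (alternatingMoment R (n + 1) k + alternatingMoment R n k) := by
  have hchoose : ∀ j ∈ range (n + 2), ((n + 1).choose j : R) * j =
      (n + 1) * (n + 1).choose j - (n + 1) * n.choose j := by
    intro j hj
    have h := congrArg (Nat.cast : ℕ → R) (choose_mul_succ_eq n j)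
    push_cast [Nat.cast_sub (mem_range_succ_iff.mp hj)] at h
    linear_combination h
  have hlast : alternatingMoment R n k =
      -∑ j ∈ range (n + 2), (-1) ^ (n + 1 - j) * (n.choose j : R) * (j : R) ^ k := by
    rw [sum_range_succ, choose_succ_self, Nat.cast_zero, mul_zero, zero_mul, add_zero,
      alternatingMoment, ← sum_neg_distrib]
    refine sum_congr rfl fun j hj => ?_
    rw [Nat.sub_add_comm (mem_range_succ_iff.mp hj), pow_succ]
    ring
  rw [hlast, alternatingMoment, alternatingMoment, mul_add, mul_sum, mul_neg, mul_sum,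
    ← sum_neg_distrib, ← sum_add_distrib]
  refine sum_congr rfl fun j hj => ?_
  linear_combination (-1) ^ (n + 1 - j) * (j : R) ^ k * hchoose j hj

theorem alternatingMoment_eq_factorial_mul_stirlingSecond (n k : ℕ) :
    alternatingMoment R n k = n ! * stirlingSecond k n := by
  induction k generalizing n with
  | zero => cases n <;> simp [alternatingMoment_succ_zero]
  | succ k ih =>
    cases n with
    | zero => simp
    | succ n =>
      rw [alternatingMoment_succ_succ, ih, ih, stirlingSecond_succ_succ, factorial_succ]
      push_cast
      ring

end AlternatingMoment

theorem stirlingSecond_eq_sum_Icc (K : Type*) [Field K] [CharZero K] {k : ℕ} (hk : k ≠ 0)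
    (n : ℕ) :
    (stirlingSecond k n : K) = ∑ j ∈ Icc 1 n, (-1) ^ (n - j) * (j : K) ^ k / ((n - j)! * j !) := by
  have h := alternatingMoment_eq_factorial_mul_stirlingSecond K n k
  rw [alternatingMoment, range_eq_Ico, sum_eq_sum_Ico_succ_bot (by omega : 0 < n + 1), zero_add,
    Ico_add_one_right_eq_Icc, Nat.cast_zero, zero_pow hk, mul_zero, zero_add] at h
  have hfac : (n ! : K) ≠ 0 := Nat.cast_ne_zero.mpr n.factorial_ne_zero
  rw [← mul_right_inj' hfac, ← h, mul_sum]
  refine sum_congr rfl fun j hj => ?_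
  rw [Nat.cast_choose K (mem_Icc.mp hj).2]
  field_simp

theorem two_mul_stirlingSecond_succ_self_left (n : ℕ) :
    2 * stirlingSecond (n + 1) n = n * (n + 1) := by
  induction n with
  | zero => simp
  | succ n ih =>
    rw [stirlingSecond_succ_succ, stirlingSecond_self, mul_add, ih]
    ring

theorem stirlingSecond_add_two_self (n : ℕ) :
    24 * stirlingSecond (n + 2) n = n * (n + 1) * (n + 2) * (3 * n + 1) := by
  induction n with
  | zero => simp
  | succ n ih =>
    have h := two_mul_stirlingSecond_succ_self_left (n + 1)
    rw [stirlingSecond_succ_succ, mul_add, ih]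
    nlinarith [h]

theorem stirlingSecond_add_three_self (n : ℕ) :
    48 * stirlingSecond (n + 3) n = n ^ 2 * (n + 1) ^ 2 * (n + 2) * (n + 3) := by
  induction n with
  | zero => simp
  | succ n ih =>
    have h := stirlingSecond_add_two_self (n + 1)
    rw [stirlingSecond_succ_succ, mul_add, ih]
    nlinarith [h]

theorem sum_Icc_alternating_mul_quadratic {K : Type*} [Field K] [CharZero K] {n : ℕ}
    (hn : n ≠ 0) (A B C E : K) :
    ∑ D ∈ Icc 1 n, (-1) ^ (n + 1 - D) * (D : K) ^ (n + 1) / ((n - D)! * D !) *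
        (A - B / D - D * C + E * D ^ 2) =
      -(A * stirlingSecond (n + 1) n - B - C * stirlingSecond (n + 2) n +
        E * stirlingSecond (n + 3) n) := by
  have hself := stirlingSecond_eq_sum_Icc K hn n
  rw [stirlingSecond_self, Nat.cast_one] at hself
  conv_rhs => rw [← mul_one B, hself]
  rw [stirlingSecond_eq_sum_Icc K n.add_one_ne_zero, stirlingSecond_eq_sum_Icc K (by omega),
    stirlingSecond_eq_sum_Icc K (by omega)]
  simp only [mul_sum, ← sum_sub_distrib, ← sum_add_distrib, ← sum_neg_distrib]
  refine sum_congr rfl fun D hDmem => ?_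
  obtain ⟨hD1, hDn⟩ := mem_Icc.mp hDmem
  have hD : (D : K) ≠ 0 := Nat.cast_ne_zero.mpr (by omega)
  rw [Nat.sub_add_comm hDn, pow_succ]
  field_simp
  ring

/-- for every integer `d ≥ 1`,
`∑_{D=1}^{5d−3} (−1)^{5d−2−D}·D^{5d−2}/((5d−3−D)!·D!) ·
  (375d³ + 225d² − 355d + 84 − (5d−3)·5d·(5d+8)/D − D·(75d² − 15d + 32) + 4D²)
= 109375d⁶/24 − 315625d⁵/24 + 246875d⁴/24 + 125d³/24 − 12225d²/4 + 3820d/3 − 188`. -/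
theorem stmt16 (d : ℕ) (hd : 1 ≤ d) :
    ∑ D ∈ Finset.Icc 1 (5 * d - 3),
        ((-1 : ℚ)) ^ (5 * d - 2 - D) * (D : ℚ) ^ (5 * d - 2) /
            ((5 * d - 3 - D).factorial * D.factorial) *
          (375 * (d : ℚ) ^ 3 + 225 * (d : ℚ) ^ 2 - 355 * (d : ℚ) + 84 -
              (5 * (d : ℚ) - 3) * (5 * (d : ℚ)) * (5 * (d : ℚ) + 8) / (D : ℚ) -
              (D : ℚ) * (75 * (d : ℚ) ^ 2 - 15 * (d : ℚ) + 32) + 4 * (D : ℚ) ^ 2) =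
      109375 * (d : ℚ) ^ 6 / 24 - 315625 * (d : ℚ) ^ 5 / 24 + 246875 * (d : ℚ) ^ 4 / 24 +
        125 * (d : ℚ) ^ 3 / 24 - 12225 * (d : ℚ) ^ 2 / 4 + 3820 * (d : ℚ) / 3 - 188 := by
  set n := 5 * d - 3 with hn
  have hn0 : n ≠ 0 := by omega
  have hnd : (n : ℚ) = 5 * d - 3 := by rw [hn, Nat.cast_sub (by omega)]; push_cast; ring
  have hS1 := congrArg (Nat.cast : ℕ → ℚ) (two_mul_stirlingSecond_succ_self_left n)
  have hS2 := congrArg (Nat.cast : ℕ → ℚ) (stirlingSecond_add_two_self n)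
  have hS3 := congrArg (Nat.cast : ℕ → ℚ) (stirlingSecond_add_three_self n)
  push_cast at hS1 hS2 hS3
  rw [hnd] at hS1 hS2 hS3
  rw [show 5 * d - 2 = n + 1 by omega, sum_Icc_alternating_mul_quadratic hn0]
  linear_combination (-(375 * (d : ℚ) ^ 3 + 225 * d ^ 2 - 355 * d + 84) / 2) * hS1 +
    ((75 * (d : ℚ) ^ 2 - 15 * d + 32) / 24) * hS2 - (1 / 12) * hS3
end

section
/- For every integer d ≥ 1, the following identity of rational numbers holds: ∑_{D=1}^{5d−2} [ (−1)^{5d−1−D} · D^{5d−1} / ((5d−2−D)! · D!) ] · ( (−625d^4 + 1125d^3 − 750d^2 + 160d)/(2D) + (1875d^4 − 3500d^3 + 2475d^2 − 680d + 64)/2 + (25d^2 + 35d − 28)·D − 4D^2 ) = −296875d^6/24 + 640625d^5/24 − 591875d^4/24 + 287375d^3/24 − 12575d^2/4 + 1330d/3 − 32. -/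
/-!
With `n = 5d - 2`, clearing the factorials turns the summand at `D` into `(-1)^D C(n, D) D^n`
times a cubic in `D`, so the sum is a combination of the alternating binomial power sums
`∑ₖ (-1)^k C(n, k) k^m = (-1)^n n! S(m, n)`, `m = n, …, n + 3`, where `S` denotes the Stirling
numbers of the second kind. The identity `k C(n+1, k) = (n+1) (C(n+1, k) - C(n, k))` shows that
these sums obey the Stirling recurrence, and `S(n + j, n)` is an explicit polynomial in `n` for
`j ≤ 3`.
-/

open Finset Nat

theorem neg_one_pow_sq {M : Type*} [Monoid M] [HasDistribNeg M] (n : ℕ) :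
    ((-1 : M) ^ n) ^ 2 = 1 := by
  rw [← pow_mul, mul_comm, pow_mul, neg_one_sq, one_pow]

section

variable {R : Type*} [CommRing R]

-- `k * C(n+1, k) = (n+1) * C(n, k-1)`, written without `k - 1` so that it also holds at `k = 0`.
theorem natCast_mul_choose_succ (n k : ℕ) :
    (k : R) * (n + 1).choose k = (n + 1) * ((n + 1).choose k - n.choose k) := by
  cases k with
  | zero => simp
  | succ k =>
    have hmul := congrArg (Nat.cast : ℕ → R) (add_one_mul_choose_eq n k)
    push_cast [choose_succ_succ] at hmul ⊢
    linear_combination -hmul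

theorem sum_range_neg_one_pow_mul_choose_succ_mul_pow_succ (m n : ℕ) :
    ∑ k ∈ range (n + 2), (-1 : R) ^ k * (n + 1).choose k * (k : R) ^ (m + 1) =
      (n + 1) * (∑ k ∈ range (n + 2), (-1 : R) ^ k * (n + 1).choose k * (k : R) ^ m -
        ∑ k ∈ range (n + 1), (-1 : R) ^ k * n.choose k * (k : R) ^ m) := by
  have hext : ∑ k ∈ range (n + 2), (-1 : R) ^ k * n.choose k * (k : R) ^ m =
      ∑ k ∈ range (n + 1), (-1 : R) ^ k * n.choose k * (k : R) ^ m := by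
    simp [sum_range_succ _ (n + 1), choose_succ_self]
  rw [← hext, ← sum_sub_distrib, mul_sum]
  refine sum_congr rfl fun k _ => ?_
  linear_combination (-1 : R) ^ k * (k : R) ^ m * natCast_mul_choose_succ (R := R) n k

theorem sum_range_neg_one_pow_mul_choose_mul_pow (m n : ℕ) :
    ∑ k ∈ range (n + 1), (-1 : R) ^ k * n.choose k * (k : R) ^ m =
      (-1) ^ n * n ! * stirlingSecond m n := by
  induction m generalizing n with
  | zero =>
    have h := congrArg (Int.cast : ℤ → R) (Int.alternating_sum_range_choose (n := n))
    cases n <;> simp at h ⊢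
    exact h
  | succ m ih =>
    cases n with
    | zero => simp
    | succ n =>
      rw [sum_range_neg_one_pow_mul_choose_succ_mul_pow_succ, ih, ih, stirlingSecond_succ_succ,
        factorial_succ]
      push_cast
      ring

theorem sum_range_neg_one_pow_mul_choose_mul_poly {r : ℕ} (a : Fin r → R) (n : ℕ) :
    ∑ k ∈ range (n + 1), (-1 : R) ^ k * n.choose k * ∑ j, a j * (k : R) ^ (n + j) =
      (-1) ^ n * n ! * ∑ j, a j * stirlingSecond (n + j) n := by
  simp_rw [mul_sum, sum_comm (s := range (n + 1))]
  refine sum_congr rfl fun j _ => ?_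
  rw [mul_left_comm, ← sum_range_neg_one_pow_mul_choose_mul_pow, mul_sum]
  exact sum_congr rfl fun k _ => by ring

end

namespace Nat

theorem stirlingSecond_add_two_self_left_s17 (n : ℕ) :
    24 * stirlingSecond (n + 2) n = n * (n + 1) * (n + 2) * (3 * n + 1) := by
  induction n with
  | zero => rfl
  | succ n ih =>
    have h2 : 2 * (n + 2).choose 2 = (n + 2) * (n + 1) := by
      rw [choose_two_right]; exact Nat.mul_div_cancel' (even_mul_pred_self _).two_dvd
    rw [stirlingSecond_succ_succ, show n + 1 + 1 = n + 2 from rfl, stirlingSecond_succ_self_left]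
    linear_combination 12 * (n + 1) * h2 + ih

theorem stirlingSecond_add_three_self_left (n : ℕ) :
    48 * stirlingSecond (n + 3) n = n ^ 2 * (n + 1) ^ 2 * (n + 2) * (n + 3) := by
  induction n with
  | zero => rfl
  | succ n ih =>
    have h := stirlingSecond_add_two_self_left_s17 (n + 1)
    rw [stirlingSecond_succ_succ, show n + 1 + 2 = n + 3 from rfl]
    linear_combination 2 * (n + 1) * h + ih

end Nat

theorem neg_one_pow_div_factorial_mul_factorial {K : Type*} [Field K] [CharZero K] {n D : ℕ}
    (h : D ≤ n) :
    (-1 : K) ^ (n + 1 - D) / ((n - D)! * D !) = -((-1) ^ n / n !) * ((-1) ^ D * n.choose D) := by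
  obtain ⟨j, rfl⟩ := exists_add_of_le h
  rw [cast_choose K h, show D + j + 1 - D = j + 1 by omega, show D + j - D = j by omega]
  have hfac : ((D + j)! : K) ≠ 0 := Nat.cast_ne_zero.mpr (factorial_ne_zero _)
  field_simp
  linear_combination (-1 : K) ^ j / (j ! * D !) * neg_one_pow_sq (M := K) D

theorem sum_Icc_one_eq_sum_range {M : Type*} [AddCommMonoid M] {f : ℕ → M} (n : ℕ)
    (h0 : f 0 = 0) : ∑ k ∈ Icc 1 n, f k = ∑ k ∈ range (n + 1), f k := by
  rw [range_eq_Ico, sum_eq_sum_Ico_succ_bot (add_one_pos n), h0, zero_add, zero_add,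
    Ico_add_one_right_eq_Icc]

theorem sum_range_neg_one_pow_mul_choose_mul_cubic {K : Type*} [Field K] [CharZero K]
    (a b c e : K) (n : ℕ) :
    ∑ k ∈ range (n + 1), (-1 : K) ^ k * n.choose k *
        (a * k ^ n + b * k ^ (n + 1) + c * k ^ (n + 2) + e * k ^ (n + 3)) =
      (-1) ^ n * n ! * (a + b * (n * (n + 1) / 2) + c * (n * (n + 1) * (n + 2) * (3 * n + 1) / 24) +
        e * (n ^ 2 * (n + 1) ^ 2 * (n + 2) * (n + 3) / 48)) := by
  have h := sum_range_neg_one_pow_mul_choose_mul_poly ![a, b, c, e] n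
  simp only [Fin.sum_univ_four, Matrix.cons_val, Fin.isValue, Fin.coe_ofNat_eq_mod, succ_eq_add_one,
    reduceAdd, reduceMod, add_zero] at h
  have h1 : ((n + 1).choose 2 : K) = n * (n + 1) / 2 := by
    rw [cast_choose_two]; push_cast; ring
  have h2 : (stirlingSecond (n + 2) n : K) = n * (n + 1) * (n + 2) * (3 * n + 1) / 24 := by
    rw [eq_div_iff (by norm_num), mul_comm]; exact_mod_cast stirlingSecond_add_two_self_left_s17 n
  have h3 : (stirlingSecond (n + 3) n : K) = n ^ 2 * (n + 1) ^ 2 * (n + 2) * (n + 3) / 48 := by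
    rw [eq_div_iff (by norm_num), mul_comm]; exact_mod_cast stirlingSecond_add_three_self_left n
  rw [h, stirlingSecond_self, stirlingSecond_succ_self_left, h1, h2, h3, cast_one, mul_one]

/-- for every integer `d ≥ 1`,
`∑_{D=1}^{5d−2} (−1)^{5d−1−D}·D^{5d−1}/((5d−2−D)!·D!) ·
  ((−625d⁴ + 1125d³ − 750d² + 160d)/(2D) + (1875d⁴ − 3500d³ + 2475d² − 680d + 64)/2
    + (25d² + 35d − 28)·D − 4D²)
= −296875d⁶/24 + 640625d⁵/24 − 591875d⁴/24 + 287375d³/24 − 12575d²/4 + 1330d/3 − 32`. -/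
theorem stmt17 (d : ℕ) (hd : 1 ≤ d) :
    ∑ D ∈ Finset.Icc 1 (5 * d - 2),
        ((-1 : ℚ)) ^ (5 * d - 1 - D) * (D : ℚ) ^ (5 * d - 1) /
            ((5 * d - 2 - D).factorial * D.factorial) *
          ((-625 * (d : ℚ) ^ 4 + 1125 * (d : ℚ) ^ 3 - 750 * (d : ℚ) ^ 2 + 160 * (d : ℚ)) /
              (2 * (D : ℚ)) +
            (1875 * (d : ℚ) ^ 4 - 3500 * (d : ℚ) ^ 3 + 2475 * (d : ℚ) ^ 2 - 680 * (d : ℚ) + 64) /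
              2 +
            (25 * (d : ℚ) ^ 2 + 35 * (d : ℚ) - 28) * (D : ℚ) - 4 * (D : ℚ) ^ 2) =
      -296875 * (d : ℚ) ^ 6 / 24 + 640625 * (d : ℚ) ^ 5 / 24 - 591875 * (d : ℚ) ^ 4 / 24 +
        287375 * (d : ℚ) ^ 3 / 24 - 12575 * (d : ℚ) ^ 2 / 4 + 1330 * (d : ℚ) / 3 - 32 := by
  set n := 5 * d - 2 with hn
  set A : ℚ := -625 * (d : ℚ) ^ 4 + 1125 * (d : ℚ) ^ 3 - 750 * (d : ℚ) ^ 2 + 160 * (d : ℚ)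
  set B : ℚ :=
    1875 * (d : ℚ) ^ 4 - 3500 * (d : ℚ) ^ 3 + 2475 * (d : ℚ) ^ 2 - 680 * (d : ℚ) + 64
  set C : ℚ := 25 * (d : ℚ) ^ 2 + 35 * (d : ℚ) - 28
  have hsummand : ∀ D ∈ Icc 1 n,
      (-1 : ℚ) ^ (5 * d - 1 - D) * (D : ℚ) ^ (5 * d - 1) / ((n - D)! * D !) *
          (A / (2 * D) + B / 2 + C * D - 4 * (D : ℚ) ^ 2) =
        -((-1) ^ n / n !) * ((-1) ^ D * n.choose D *
          (A / 2 * D ^ n + B / 2 * D ^ (n + 1) + C * D ^ (n + 2) + -4 * D ^ (n + 3))) := by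
    intro D hD
    obtain ⟨hD1, hDn⟩ := mem_Icc.mp hD
    have hD0 : (D : ℚ) ≠ 0 := by positivity
    rw [show 5 * d - 1 - D = n + 1 - D by omega, show 5 * d - 1 = n + 1 by omega,
      mul_div_right_comm, neg_one_pow_div_factorial_mul_factorial hDn]
    field_simp
    ring
  have hunit : (-1 : ℚ) ^ n / n ! * ((-1) ^ n * n !) = 1 := by
    field_simp; exact neg_one_pow_sq n
  have hcast : (n : ℚ) = 5 * d - 2 := by
    rw [hn, Nat.cast_sub (by omega : 2 ≤ 5 * d)]; push_cast; ring
  rw [sum_congr rfl hsummand, ← mul_sum,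
    sum_Icc_one_eq_sum_range n (by simp [show n ≠ 0 by omega]),
    sum_range_neg_one_pow_mul_choose_mul_cubic, ← mul_assoc, neg_mul, hunit, neg_one_mul, hcast]
  ring
end
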